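/- arXiv:1512.03522 — 2 statements merged into one kernel-verified Lean document; each statement's English description precedes it below -/
import Mathlib

section
/- For every k = 1, …, n one has ∑_{i=1}^{m+1} H_i ϑ_k/(ϑ_k + β̂_i) − ∑_{j=1}^{n+1} N_j ϑ_k/(ϑ_k − γ̂_j) − 1 = 0. -/
/-!
Put `P(x) = ∏ₖ (x + ηₖ) ∏ₖ (ϑₖ - x)` and `Q(x) = ∏ᵢ (x + β̂ᵢ) ∏ⱼ (x - γ̂ⱼ)`. Since `deg P < deg Q`
and the roots `-β̂ᵢ`, `γ̂ⱼ` of `Q` are simple (interlacing), Lagrange interpolation gives the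
partial fraction expansion `P/Q = ∑ₛ wₛ P(vₛ) / (x - vₛ)` over these nodes. Subtracting it at
`x = t` from the one at `x = 0` and scaling by `Q(0)/P(0)` gives
`1 - (Q(0)/P(0)) P(t)/Q(t) = ∑ₛ Kₛ t/(t - vₛ)`, and a direct computation identifies `Kₛ` with
`H_i` at `vₛ = -β̂ᵢ` and with `-N_j` at `vₛ = γ̂ⱼ`. At `t = ϑₖ`, a root of `P`, the left side is `1`.
-/

open Finset Polynomial Lagrange

namespace Lagrange

variable {F ι : Type*} [Field F] [DecidableEq ι] {s : Finset ι} {v : ι → F} {P : F[X]}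

theorem sum_nodalWeight_mul_eval_div_sub (hvs : Set.InjOn v s) (hP : P.degree < #s) {x : F}
    (hx : ∀ i ∈ s, x ≠ v i) :
    ∑ i ∈ s, nodalWeight s v i * P.eval (v i) / (x - v i) = P.eval x / (nodal s v).eval x := by
  rw [eq_div_iff (eval_nodal_not_at_node hx), mul_comm, eq_interpolate hvs hP,
    eval_interpolate_not_at_node _ hx, ← eq_interpolate hvs hP]
  simp only [div_eq_mul_inv, mul_right_comm]

/-- The coefficient of `t / (t - v i)` in the expansion of `1 - (Q 0 / P 0) * (P t / Q t)`,
where `Q = nodal s v`. -/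
noncomputable def partialFractionCoeff (s : Finset ι) (v : ι → F) (P : F[X]) (i : ι) : F :=
  (nodal s v).eval 0 / P.eval 0 * (nodalWeight s v i * P.eval (v i) / -v i)

theorem sum_partialFractionCoeff_mul_div_sub (hvs : Set.InjOn v s) (hP : P.degree < #s)
    (hP0 : P.eval 0 ≠ 0) (hv : ∀ i ∈ s, v i ≠ 0) {t : F} (ht : ∀ i ∈ s, t ≠ v i) :
    ∑ i ∈ s, partialFractionCoeff s v P i * (t / (t - v i)) =
      1 - (nodal s v).eval 0 / P.eval 0 * (P.eval t / (nodal s v).eval t) := by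
  have h0 : ∀ i ∈ s, (0 : F) ≠ v i := fun i hi => (hv i hi).symm
  have hsplit : ∀ i ∈ s, nodalWeight s v i * P.eval (v i) / -v i * (t / (t - v i)) =
      nodalWeight s v i * P.eval (v i) / (0 - v i) -
        nodalWeight s v i * P.eval (v i) / (t - v i) := by
    intro i hi
    have := sub_ne_zero.2 (ht i hi)
    have := hv i hi
    field_simp
    ring
  simp_rw [partialFractionCoeff, mul_assoc, ← mul_sum]
  rw [sum_congr rfl hsplit, sum_sub_distrib, sum_nodalWeight_mul_eval_div_sub hvs hP h0,
    sum_nodalWeight_mul_eval_div_sub hvs hP ht, mul_sub, div_mul_div_cancel₀ hP0,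
    div_self (eval_nodal_not_at_node h0)]

section SumType

variable {κ : Type*} [Fintype ι] [Fintype κ] [DecidableEq κ]

theorem nodalWeight_inl (v : ι ⊕ κ → F) (i : ι) :
    nodalWeight univ v (.inl i) =
      nodalWeight univ (v ∘ .inl) i * ∏ j, (v (.inl i) - v (.inr j))⁻¹ := by
  rw [nodalWeight, show univ.erase (.inl i) = (univ.erase i).disjSum univ by
    ext (_ | _) <;> simp, prod_disjSum]
  rfl

theorem nodalWeight_inr (v : ι ⊕ κ → F) (j : κ) :
    nodalWeight univ v (.inr j) =
      (∏ i, (v (.inr j) - v (.inl i))⁻¹) * nodalWeight univ (v ∘ .inr) j := by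
  rw [nodalWeight, show univ.erase (.inr j) = univ.disjSum (univ.erase j) by
    ext (_ | _) <;> simp, prod_disjSum]
  rfl

end SumType

end Lagrange

section Interlacing

variable {α : Type*} [Preorder α] {m : ℕ} {a : Fin (m + 1) → α} {b : Fin m → α}

theorem strictMono_of_interlacing (h : ∀ k, a k.castSucc < b k ∧ b k < a k.succ) :
    StrictMono a :=
  Fin.strictMono_iff_lt_succ.2 fun k => (h k).1.trans (h k).2

theorem ne_of_interlacing (h : ∀ k, a k.castSucc < b k ∧ b k < a k.succ) (k : Fin m)
    (j : Fin (m + 1)) : b k ≠ a j := by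
  have ha := (strictMono_of_interlacing h).monotone
  rcases le_or_gt j k.castSucc with hj | hj
  · exact ((ha hj).trans_lt (h k).1).ne'
  · exact ((h k).2.trans_le (ha (Fin.castSucc_lt_iff_succ_le.1 hj))).ne

theorem pos_of_interlacing [Zero α] (h0 : 0 < a 0)
    (h : ∀ k, a k.castSucc < b k ∧ b k < a k.succ) (j : Fin (m + 1)) : 0 < a j :=
  h0.trans_le ((strictMono_of_interlacing h).monotone (Fin.zero_le j))

end Interlacing

section Nodes

variable {F ι κ : Type*} [Field F] [LinearOrder F] [IsStrictOrderedRing F]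
  {β : ι → F} {γ : κ → F}

theorem injective_sumElim_neg (hβ : Function.Injective β) (hγ : Function.Injective γ)
    (hβpos : ∀ i, 0 < β i) (hγpos : ∀ j, 0 < γ j) : Function.Injective (Sum.elim (-β) γ) :=
  (neg_injective.comp hβ).sumElim hγ fun i j => by
    simp only [Function.comp_apply]
    linarith [hβpos i, hγpos j]

theorem ne_sumElim_neg {x : F} (hx : 0 ≤ x) (hβpos : ∀ i, 0 < β i) (hγ : ∀ j, x ≠ γ j) :
    ∀ s, x ≠ Sum.elim (-β) γ s
  | .inl i => ((neg_neg_of_pos (hβpos i)).trans_le hx).ne'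
  | .inr j => hγ j

end Nodes

section Residues

variable {F σ τ ι κ : Type*} [Field F] [Fintype σ] [Fintype τ] [Fintype ι] [Fintype κ]
  [DecidableEq ι] [DecidableEq κ] (η : σ → F) (ϑ : τ → F) (β : ι → F) (γ : κ → F)

noncomputable def numeratorPoly : F[X] :=
  (∏ k, (X + C (η k))) * ∏ k, (C (ϑ k) - X)

theorem eval_numeratorPoly (x : F) :
    (numeratorPoly η ϑ).eval x = (∏ k, (x + η k)) * ∏ k, (ϑ k - x) := by
  simp [numeratorPoly, eval_prod]

theorem degree_numeratorPoly :
    (numeratorPoly η ϑ).degree = Fintype.card σ + Fintype.card τ := by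
  have h : ∀ a : F, (C a - X).degree = 1 := fun a => by
    rw [← neg_sub, degree_neg, degree_X_sub_C]
  simp [numeratorPoly, degree_mul, degree_prod, h]

theorem eval_numeratorPoly_zero_ne_zero (hη : ∀ k, η k ≠ 0) (hϑ : ∀ k, ϑ k ≠ 0) :
    (numeratorPoly η ϑ).eval 0 ≠ 0 := by
  simp only [eval_numeratorPoly, zero_add, sub_zero]
  exact mul_ne_zero (prod_ne_zero_iff.2 fun k _ => hη k) (prod_ne_zero_iff.2 fun k _ => hϑ k)

theorem isRoot_numeratorPoly (k : τ) : (numeratorPoly η ϑ).IsRoot (ϑ k) := by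
  rw [IsRoot.def, eval_numeratorPoly]
  exact mul_eq_zero_of_right _ (prod_eq_zero (mem_univ k) (sub_self _))

theorem partialFractionCoeff_inl {i : ι} (hi : β i ≠ 0) :
    partialFractionCoeff univ (Sum.elim (-β) γ) (numeratorPoly η ϑ) (.inl i) =
      ((∏ k, (η k - β i)) * (∏ k ∈ univ.erase i, β k) * (∏ k, (β i + ϑ k)) * (∏ k, γ k)) /
        ((∏ k, η k) * (∏ k ∈ univ.erase i, (β k - β i)) * (∏ k, ϑ k) * (∏ k, (β i + γ k))) := by
  have e1 : ∏ k, (-β i + η k) = ∏ k, (η k - β i) := prod_congr rfl fun _ _ => by ring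
  have e2 : ∏ k, (ϑ k + β i) = ∏ k, (β i + ϑ k) := prod_congr rfl fun _ _ => by ring
  have e3 : ∏ k ∈ univ.erase i, (-β i + β k) = ∏ k ∈ univ.erase i, (β k - β i) :=
    prod_congr rfl fun _ _ => by ring
  have e4 : ∏ k, (-β i - γ k) = ∏ k, -(β i + γ k) := prod_congr rfl fun _ _ => by ring
  have e5 : ∏ k, (0 - γ k) = ∏ k, -γ k := prod_congr rfl fun _ _ => by ring
  rw [partialFractionCoeff, nodalWeight_inl, nodalWeight, eval_nodal, eval_numeratorPoly,
    eval_numeratorPoly, Fintype.prod_sum_type]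
  simp only [Sum.elim_inl, Sum.elim_inr, Function.comp_apply, Pi.neg_apply, prod_inv_distrib,
    sub_neg_eq_add, zero_add, sub_zero, neg_neg, e1, e2, e3, e4, e5, prod_neg]
  rw [← mul_prod_erase univ β (mem_univ i)]
  field_simp

theorem partialFractionCoeff_inr {j : κ} (hj : γ j ≠ 0) :
    partialFractionCoeff univ (Sum.elim (-β) γ) (numeratorPoly η ϑ) (.inr j) =
      ((∏ k, (ϑ k - γ j)) * (∏ k ∈ univ.erase j, γ k) * (∏ k, (γ j + η k)) * (∏ k, β k)) /
        ((∏ k, ϑ k) * (∏ k ∈ univ.erase j, (γ k - γ j)) * (∏ k, η k) * (∏ k, (γ j + β k))) := by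
  have e1 : ∏ k ∈ univ.erase j, (γ j - γ k) = ∏ k ∈ univ.erase j, -(γ k - γ j) :=
    prod_congr rfl fun _ _ => by ring
  have e2 : ∏ k, (0 - γ k) = ∏ k, -γ k := prod_congr rfl fun _ _ => by ring
  rw [partialFractionCoeff, nodalWeight_inr, nodalWeight, eval_nodal, eval_numeratorPoly,
    eval_numeratorPoly, Fintype.prod_sum_type]
  simp only [Sum.elim_inl, Sum.elim_inr, Function.comp_apply, Pi.neg_apply, prod_inv_distrib,
    sub_neg_eq_add, zero_add, sub_zero, e1, e2, prod_neg]
  rw [← mul_prod_erase univ γ (mem_univ j), ← card_erase_add_one (mem_univ j), pow_succ]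
  symm
  field_simp

end Residues

theorem stmt_10_general (m n : ℕ)
    (η : Fin m → ℝ) (ϑ : Fin n → ℝ)
    (βh : Fin (m + 1) → ℝ) (γh : Fin (n + 1) → ℝ)
    (hβ0 : 0 < βh 0)
    (hβint : ∀ k : Fin m, βh k.castSucc < η k ∧ η k < βh k.succ)
    (hγ0 : 0 < γh 0)
    (hγint : ∀ k : Fin n, γh k.castSucc < ϑ k ∧ ϑ k < γh k.succ)
    (H : Fin (m + 1) → ℝ)
    (hH : ∀ i, H i =
      ((∏ k, (η k - βh i)) * (∏ k ∈ Finset.univ.erase i, βh k) *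
          (∏ k, (βh i + ϑ k)) * (∏ k, γh k)) /
        ((∏ k, η k) * (∏ k ∈ Finset.univ.erase i, (βh k - βh i)) *
          (∏ k, ϑ k) * (∏ k, (βh i + γh k))))
    (N : Fin (n + 1) → ℝ)
    (hN : ∀ j, N j =
      -(((∏ k, (ϑ k - γh j)) * (∏ k ∈ Finset.univ.erase j, γh k) *
          (∏ k, (γh j + η k)) * (∏ k, βh k)) /
        ((∏ k, ϑ k) * (∏ k ∈ Finset.univ.erase j, (γh k - γh j)) *
          (∏ k, η k) * (∏ k, (γh j + βh k))))) :
    ∀ k : Fin n,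
      (∑ i, H i * ϑ k / (ϑ k + βh i)) - (∑ j, N j * ϑ k / (ϑ k - γh j)) - 1 = 0 := by
  intro k
  have hβpos := pos_of_interlacing hβ0 hβint
  have hγpos := pos_of_interlacing hγ0 hγint
  have hϑpos j : 0 < ϑ j := (hγpos _).trans (hγint j).1
  set v := Sum.elim (-βh) γh
  set P := numeratorPoly η ϑ
  have hv : Function.Injective v := injective_sumElim_neg
    (strictMono_of_interlacing hβint).injective (strictMono_of_interlacing hγint).injective
    hβpos hγpos
  have hP : P.degree < #(univ : Finset (Fin (m + 1) ⊕ Fin (n + 1))) := by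
    simp only [P, degree_numeratorPoly, card_univ, Fintype.card_sum, Fintype.card_fin]
    exact_mod_cast (by omega : m + n < m + 1 + (n + 1))
  have hP0 : P.eval 0 ≠ 0 := eval_numeratorPoly_zero_ne_zero _ _
    (fun i => ((hβpos _).trans (hβint i).1).ne') (fun j => (hϑpos j).ne')
  have key := sum_partialFractionCoeff_mul_div_sub hv.injOn hP hP0
    (fun s _ => (ne_sumElim_neg le_rfl hβpos (fun j => (hγpos j).ne) s).symm)
    (fun s _ => ne_sumElim_neg (hϑpos k).le hβpos (ne_of_interlacing hγint k) s)
  rw [(isRoot_numeratorPoly η ϑ k).eq_zero, zero_div, mul_zero, sub_zero, Fintype.sum_sum_type] at key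
  have hH' : ∑ i, H i * ϑ k / (ϑ k + βh i) =
      ∑ i, partialFractionCoeff univ v P (.inl i) * (ϑ k / (ϑ k - v (.inl i))) :=
    sum_congr rfl fun i _ => by
      rw [hH, ← partialFractionCoeff_inl _ _ _ _ (hβpos i).ne', mul_div_assoc]
      simp only [v, P, Sum.elim_inl, Pi.neg_apply, sub_neg_eq_add]
  have hN' : ∑ j, N j * ϑ k / (ϑ k - γh j) =
      -∑ j, partialFractionCoeff univ v P (.inr j) * (ϑ k / (ϑ k - v (.inr j))) := by
    rw [← sum_neg_distrib]
    refine sum_congr rfl fun j _ => ?_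
    rw [hN, ← partialFractionCoeff_inr _ _ _ _ (hγpos j).ne']
    simp only [v, P, Sum.elim_inr]
    ring
  rw [hH', hN', ← key]
  ring

/-- Third identity of (C.3): with the coefficients `H_i`, `N_j` of (3.5), for every
`k = 1, …, n`, `∑_i H_i ϑ_k/(ϑ_k + β̂_i) − ∑_j N_j ϑ_k/(ϑ_k − γ̂_j) − 1 = 0`. -/
theorem stmt_10 (m n : ℕ) (hm : 1 ≤ m) (hn : 1 ≤ n)
    (η : Fin m → ℝ) (ϑ : Fin n → ℝ)
    (βh : Fin (m + 1) → ℝ) (γh : Fin (n + 1) → ℝ)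
    (hβ0 : 0 < βh 0)
    (hβint : ∀ k : Fin m, βh k.castSucc < η k ∧ η k < βh k.succ)
    (hγ0 : 0 < γh 0)
    (hγint : ∀ k : Fin n, γh k.castSucc < ϑ k ∧ ϑ k < γh k.succ)
    (H : Fin (m + 1) → ℝ)
    (hH : ∀ i, H i =
      ((∏ k, (η k - βh i)) * (∏ k ∈ Finset.univ.erase i, βh k) *
          (∏ k, (βh i + ϑ k)) * (∏ k, γh k)) /
        ((∏ k, η k) * (∏ k ∈ Finset.univ.erase i, (βh k - βh i)) *
          (∏ k, ϑ k) * (∏ k, (βh i + γh k))))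
    (N : Fin (n + 1) → ℝ)
    (hN : ∀ j, N j =
      -(((∏ k, (ϑ k - γh j)) * (∏ k ∈ Finset.univ.erase j, γh k) *
          (∏ k, (γh j + η k)) * (∏ k, βh k)) /
        ((∏ k, ϑ k) * (∏ k ∈ Finset.univ.erase j, (γh k - γh j)) *
          (∏ k, η k) * (∏ k, (γh j + βh k))))) :
    ∀ k : Fin n,
      (∑ i, H i * ϑ k / (ϑ k + βh i)) - (∑ j, N j * ϑ k / (ϑ k - γh j)) - 1 = 0 :=
  stmt_10_general m n η ϑ βh γh hβ0 hβint hγ0 hγint H hH N hN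
end

section
/- For every i = 1, …, m+1 one has Ẽ_i + F̃_i + E_i = 0, where Ẽ_i = −[∏_{k=1}^{m}(η_k − β̃_i) · ∏_{k≠i} β̃_k · ∏_{k=1}^{n}(β̃_i + ϑ_k) · ∏_{k=1}^{n+1} γ̃_k] / [∏_{k=1}^{m} η_k · ∏_{k≠i}(β̃_k − β̃_i) · ∏_{k=1}^{n} ϑ_k · ∏_{k=1}^{n+1}(β̃_i + γ̃_k)], E_i = [∏_{k=1}^{m+1} β̂_k · ∏_{k=1}^{n+1} γ̂_k · ∏_{k=1}^{m}(β̃_i − η_k) · ∏_{k=1}^{n}(β̃_i + ϑ_k)] / [∏_{k=1}^{m} η_k · ∏_{k=1}^{n} ϑ_k · ∏_{k≠i}(β̃_i − β̃_k) · ∏_{k=1}^{n+1}(β̃_i + γ̂_k)] · ∑_{j=1}^{m+1} [∏_{k=1, k≠i}^{m+1}(β̂_j − β̃_k)] / [β̂_j · ∏_{k≠j}(β̂_j − β̂_k)], and F̃_i = [∏_{k=1}^{m+1} β̃_k · ∏_{k=1}^{n+1} γ̃_k · ∏_{k=1}^{m}(β̃_i − η_k) · ∏_{k=1}^{n}(β̃_i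 + ϑ_k)] / [∏_{k=1}^{m} η_k · ∏_{k=1}^{n} ϑ_k · ∏_{k≠i}(β̃_i − β̃_k) · ∏_{k=1}^{n+1}(β̃_i + γ̂_k)] · ∑_{j=1}^{n+1} [∏_{k=1}^{n+1}(γ̂_k − γ̃_j)] / [−γ̃_j (β̃_i + γ̃_j) · ∏_{k≠j}(γ̃_k − γ̃_j)]. -/
/-!
Both sums are partial-fraction sums, evaluated by the first barycentric form of Lagrange
interpolation with one degree of slack: if `deg f ≤ #s` and `x` is not a node, then
`∑ wᵢ f(vᵢ) / (x - vᵢ) = f(x) / N(x) - c`, where `wᵢ` are the nodal weights, `N` is the nodal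
polynomial and `c` is the coefficient of `X ^ #s` in `f`.

With nodes `β̂` and `x = 0` the sum in `E_i` equals `∏_{k ≠ i} β̃_k / ∏ β̂_k`. With nodes `-γ̃`,
splitting `1 / (γ (β + γ)) = (1 / γ - 1 / (β + γ)) / β` and evaluating at `x = 0` and `x = β = β̃_i`,
the constant `c` cancels and the sum in `F̃_i` equals `(∏ (β + γ̂) / ∏ (β + γ̃) - ∏ γ̂ / ∏ γ̃) / β`.
After these substitutions `F̃_i + E_i` collapses to `-Ẽ_i`.
-/

open Polynomial Finset

namespace Lagrange

section Nodal

variable {R ι : Type*} [CommRing R] {s : Finset ι} {v : ι → R}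

theorem eval_nodal_neg (x : R) : (nodal s fun i => -v i).eval x = ∏ i ∈ s, (x + v i) := by
  simp only [eval_nodal, sub_neg_eq_add]

variable [Nontrivial R]

theorem degree_sub_C_coeff_card_mul_nodal_lt {f : R[X]} (hf : f.degree ≤ #s) :
    (f - C (f.coeff #s) * nodal s v).degree < #s := by
  rw [degree_lt_iff_coeff_zero]
  intro k hk
  rw [coeff_sub, coeff_C_mul]
  rcases hk.eq_or_lt with rfl | hk
  · rw [← natDegree_nodal (v := v), nodal_monic.coeff_natDegree, natDegree_nodal, mul_one,
      sub_self]
  · rw [coeff_eq_zero_of_degree_lt (hf.trans_lt (by exact_mod_cast hk)),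
      coeff_eq_zero_of_natDegree_lt (p := nodal s v) (natDegree_nodal (v := v) ▸ hk), mul_zero,
      sub_zero]

end Nodal

variable {F ι : Type*} [Field F] [DecidableEq ι] {s : Finset ι} {v : ι → F}

theorem eq_interpolate_add_C_coeff_card_mul_nodal (hvs : Set.InjOn v s) {f : F[X]}
    (hf : f.degree ≤ #s) :
    f = interpolate s v (fun i => f.eval (v i)) + C (f.coeff #s) * nodal s v := by
  rw [← sub_eq_iff_eq_add]
  refine eq_interpolate_of_eval_eq _ hvs (degree_sub_C_coeff_card_mul_nodal_lt hf) ?_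
  intro i hi
  rw [eval_sub, eval_mul, eval_nodal_at_node hi, mul_zero, sub_zero]

theorem sum_nodalWeight_mul_inv_sub_mul_eval (hvs : Set.InjOn v s) {f : F[X]}
    (hf : f.degree ≤ #s) {x : F} (hx : ∀ i ∈ s, x ≠ v i) :
    ∑ i ∈ s, nodalWeight s v i * (x - v i)⁻¹ * f.eval (v i) =
      f.eval x / (nodal s v).eval x - f.coeff #s := by
  have hN := eval_nodal_not_at_node hx
  have hfx := congrArg (eval x) (eq_interpolate_add_C_coeff_card_mul_nodal hvs hf)
  rw [eval_add, eval_interpolate_not_at_node _ hx, eval_mul, eval_C] at hfx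
  rw [hfx]
  field_simp
  ring

end Lagrange

theorem Finset.prod_sub_swap {R ι : Type*} [CommRing R] (s : Finset ι) (f : ι → R) (x : R) :
    ∏ i ∈ s, (f i - x) = (-1) ^ #s * ∏ i ∈ s, (x - f i) := by
  simp only [← neg_sub x, prod_neg]

section PartialFractions

open Lagrange

variable {F ι κ : Type*} [Field F] [DecidableEq ι] {s : Finset ι}

theorem sum_prod_sub_div_mul_prod_erase_sub {b : ι → F} (hbs : Set.InjOn b s)
    (hb : ∀ j ∈ s, b j ≠ 0) (t : Finset κ) (a : κ → F) (hts : #t + 1 = #s) :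
    ∑ j ∈ s, (∏ k ∈ t, (b j - a k)) / (b j * ∏ k ∈ s.erase j, (b j - b k)) =
      (∏ k ∈ t, a k) / ∏ k ∈ s, b k := by
  have hdeg : (nodal t a).degree < #s := by
    rw [degree_nodal, ← hts]; exact_mod_cast Nat.lt_succ_self _
  have key := sum_nodalWeight_mul_inv_sub_mul_eval hbs hdeg.le (x := 0)
    fun j hj => (hb j hj).symm
  rw [coeff_eq_zero_of_degree_lt hdeg, sub_zero, eval_nodal, eval_nodal] at key
  simp only [zero_sub, prod_neg, ← hts, pow_succ] at key
  rw [mul_assoc, mul_div_mul_left _ _ (pow_ne_zero _ (neg_ne_zero.2 one_ne_zero)), neg_one_mul,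
    div_neg] at key
  rw [← neg_neg ((∏ k ∈ t, a k) / ∏ k ∈ s, b k), ← key, ← sum_neg_distrib]
  refine sum_congr rfl fun j _ => ?_
  rw [nodalWeight, prod_inv_distrib, eval_nodal, inv_neg, div_eq_mul_inv, mul_inv]
  ring

theorem sum_prod_sub_div_neg_mul_add_mul_prod_erase_sub {c : ι → F} (hcs : Set.InjOn c s)
    {β : F} (hβ : β ≠ 0) (hc : ∀ j ∈ s, c j ≠ 0) (hβc : ∀ j ∈ s, β + c j ≠ 0)
    (t : Finset κ) (d : κ → F) (hts : #t ≤ #s) :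
    ∑ j ∈ s, (∏ k ∈ t, (d k - c j)) / (-c j * (β + c j) * ∏ k ∈ s.erase j, (c k - c j)) =
      (∏ k ∈ t, (β + d k)) / (β * ∏ k ∈ s, (β + c k)) -
        (∏ k ∈ t, d k) / (β * ∏ k ∈ s, c k) := by
  have hvs : Set.InjOn (fun k => -c k) s := neg_injective.comp_injOn hcs
  have hdeg : (nodal t fun k => -d k).degree ≤ #s := by
    rw [degree_nodal]; exact_mod_cast hts
  have at_zero := sum_nodalWeight_mul_inv_sub_mul_eval hvs hdeg (x := 0)
    fun j hj => by simpa [eq_comm] using hc j hj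
  have at_β := sum_nodalWeight_mul_inv_sub_mul_eval hvs hdeg (x := β)
    fun j hj => by simpa [← sub_eq_zero] using hβc j hj
  have hw : ∀ j, nodalWeight s (fun k => -c k) j = (∏ k ∈ s.erase j, (c k - c j))⁻¹ := by
    simp only [nodalWeight, neg_sub_neg, prod_inv_distrib, implies_true]
  simp only [hw, eval_nodal_neg, sub_neg_eq_add, zero_add, neg_add_eq_sub] at at_zero at_β
  calc _ = -β⁻¹ * (∑ j ∈ s, (∏ k ∈ s.erase j, (c k - c j))⁻¹ * (c j)⁻¹ * ∏ k ∈ t, (d k - c j) -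
          ∑ j ∈ s, (∏ k ∈ s.erase j, (c k - c j))⁻¹ * (β + c j)⁻¹ * ∏ k ∈ t, (d k - c j)) := by
        rw [← sum_sub_distrib, mul_sum]
        refine sum_congr rfl fun j hj => ?_
        have := hc j hj
        have := hβc j hj
        field_simp
        ring
    _ = _ := by
        rw [at_zero, at_β]
        field_simp
        ring

end PartialFractions

section Interlacing

variable {α : Type*} [Preorder α] {m : ℕ} {b : Fin (m + 1) → α} {c : Fin m → α}

theorem strictMono_of_interlace (h : ∀ k : Fin m, b k.castSucc < c k ∧ c k < b k.succ) :
    StrictMono b :=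
  Fin.strictMono_iff_lt_succ.mpr fun k => (h k).1.trans (h k).2

theorem pos_of_interlace [Zero α] (h0 : 0 < b 0)
    (h : ∀ k : Fin m, b k.castSucc < c k ∧ c k < b k.succ) (k : Fin (m + 1)) : 0 < b k :=
  h0.trans_le ((strictMono_of_interlace h).monotone (Fin.zero_le k))

end Interlacing

theorem stmt_15_general (m n : ℕ)
    (η : Fin m → ℝ) (ϑ : Fin n → ℝ)
    (βt : Fin (m + 1) → ℝ) (γt : Fin (n + 1) → ℝ)
    (βh : Fin (m + 1) → ℝ) (γh : Fin (n + 1) → ℝ)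
    (hβt0 : 0 < βt 0)
    (hβtint : ∀ k : Fin m, βt k.castSucc < η k ∧ η k < βt k.succ)
    (hγt0 : 0 < γt 0)
    (hγtint : ∀ k : Fin n, γt k.castSucc < ϑ k ∧ ϑ k < γt k.succ)
    (hβh0 : 0 < βh 0)
    (hβhint : ∀ k : Fin m, βh k.castSucc < η k ∧ η k < βh k.succ)
    (hγh0 : 0 < γh 0)
    (hγhint : ∀ k : Fin n, γh k.castSucc < ϑ k ∧ ϑ k < γh k.succ)
    (Et : Fin (m + 1) → ℝ)
    (hEt : ∀ i, Et i =
      -(((∏ k, (η k - βt i)) * (∏ k ∈ Finset.univ.erase i, βt k) *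
          (∏ k, (βt i + ϑ k)) * (∏ k, γt k)) /
        ((∏ k, η k) * (∏ k ∈ Finset.univ.erase i, (βt k - βt i)) *
          (∏ k, ϑ k) * (∏ k, (βt i + γt k)))))
    (E : Fin (m + 1) → ℝ)
    (hE : ∀ i, E i =
      (((∏ k, βh k) * (∏ k, γh k) * (∏ k, (βt i - η k)) * (∏ k, (βt i + ϑ k))) /
        ((∏ k, η k) * (∏ k, ϑ k) * (∏ k ∈ Finset.univ.erase i, (βt i - βt k)) *
          (∏ k, (βt i + γh k)))) *
      (∑ j : Fin (m + 1), (∏ k ∈ Finset.univ.erase i, (βh j - βt k)) /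
        (βh j * ∏ k ∈ Finset.univ.erase j, (βh j - βh k))))
    (Ft : Fin (m + 1) → ℝ)
    (hFt : ∀ i, Ft i =
      (((∏ k, βt k) * (∏ k, γt k) * (∏ k, (βt i - η k)) * (∏ k, (βt i + ϑ k))) /
        ((∏ k, η k) * (∏ k, ϑ k) * (∏ k ∈ Finset.univ.erase i, (βt i - βt k)) *
          (∏ k, (βt i + γh k)))) *
      (∑ j : Fin (n + 1), (∏ k, (γh k - γt j)) /
        (-γt j * (βt i + γt j) * ∏ k ∈ Finset.univ.erase j, (γt k - γt j)))) :
    ∀ i : Fin (m + 1), Et i + Ft i + E i = 0 := by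
  have hβt_pos := pos_of_interlace hβt0 hβtint
  have hγt_pos := pos_of_interlace hγt0 hγtint
  have hβh_pos := pos_of_interlace hβh0 hβhint
  have hγh_pos := pos_of_interlace hγh0 hγhint
  have hη_pos k : 0 < η k := (hβt_pos _).trans (hβtint k).1
  have hϑ_pos k : 0 < ϑ k := (hγt_pos _).trans (hγtint k).1
  intro i
  have hsumE := sum_prod_sub_div_mul_prod_erase_sub (s := univ)
    (strictMono_of_interlace hβhint).injective.injOn (fun j _ => (hβh_pos j).ne')
    (univ.erase i) βt (by simp)
  have hsumF := sum_prod_sub_div_neg_mul_add_mul_prod_erase_sub (s := univ)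
    (strictMono_of_interlace hγtint).injective.injOn (hβt_pos i).ne'
    (fun j _ => (hγt_pos j).ne') (fun j _ => (add_pos (hβt_pos i) (hγt_pos j)).ne') univ γh le_rfl
  rw [hEt i, hE i, hFt i, hsumE, hsumF, prod_sub_swap univ η, prod_sub_swap (univ.erase i) βt,
    ← mul_prod_erase univ βt (mem_univ i)]
  simp only [card_erase_of_mem (mem_univ i), card_univ, Fintype.card_fin, Nat.add_sub_cancel]
  have : ∏ k ∈ univ.erase i, (βt i - βt k) ≠ 0 :=
    prod_ne_zero_iff.2 fun k hk => sub_ne_zero.2 ((strictMono_of_interlace hβtint).injective.ne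
      (ne_of_mem_erase hk).symm)
  have := (hβt_pos i).ne'
  have : ∏ k, η k ≠ 0 := (prod_pos fun k _ => hη_pos k).ne'
  have : ∏ k, ϑ k ≠ 0 := (prod_pos fun k _ => hϑ_pos k).ne'
  have : ∏ k, γt k ≠ 0 := (prod_pos fun k _ => hγt_pos k).ne'
  have : ∏ k, βh k ≠ 0 := (prod_pos fun k _ => hβh_pos k).ne'
  have : ∏ k, (βt i + γt k) ≠ 0 := (prod_pos fun k _ => add_pos (hβt_pos i) (hγt_pos k)).ne'
  have : ∏ k, (βt i + γh k) ≠ 0 := (prod_pos fun k _ => add_pos (hβt_pos i) (hγh_pos k)).ne'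
  field_simp
  ring

/-- First family of identities in (C.15), from the proof of Corollary 3.2:
`Ẽ_i + F̃_i + E_i = 0` for `i = 1, …, m+1`, where `Ẽ_i` is the coefficient from (3.10),
and `E_i`, `F̃_i` are the coefficients `E_i^1` from (3.25) and `F̃_i^1` from (3.28)
evaluated at `y = b_1`. -/
theorem stmt_15 (m n : ℕ) (hm : 1 ≤ m) (hn : 1 ≤ n)
    (η : Fin m → ℝ) (ϑ : Fin n → ℝ)
    (βt : Fin (m + 1) → ℝ) (γt : Fin (n + 1) → ℝ)
    (βh : Fin (m + 1) → ℝ) (γh : Fin (n + 1) → ℝ)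
    (hβt0 : 0 < βt 0)
    (hβtint : ∀ k : Fin m, βt k.castSucc < η k ∧ η k < βt k.succ)
    (hγt0 : 0 < γt 0)
    (hγtint : ∀ k : Fin n, γt k.castSucc < ϑ k ∧ ϑ k < γt k.succ)
    (hβh0 : 0 < βh 0)
    (hβhint : ∀ k : Fin m, βh k.castSucc < η k ∧ η k < βh k.succ)
    (hγh0 : 0 < γh 0)
    (hγhint : ∀ k : Fin n, γh k.castSucc < ϑ k ∧ ϑ k < γh k.succ)
    (Et : Fin (m + 1) → ℝ)
    (hEt : ∀ i, Et i =
      -(((∏ k, (η k - βt i)) * (∏ k ∈ Finset.univ.erase i, βt k) *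
          (∏ k, (βt i + ϑ k)) * (∏ k, γt k)) /
        ((∏ k, η k) * (∏ k ∈ Finset.univ.erase i, (βt k - βt i)) *
          (∏ k, ϑ k) * (∏ k, (βt i + γt k)))))
    (E : Fin (m + 1) → ℝ)
    (hE : ∀ i, E i =
      (((∏ k, βh k) * (∏ k, γh k) * (∏ k, (βt i - η k)) * (∏ k, (βt i + ϑ k))) /
        ((∏ k, η k) * (∏ k, ϑ k) * (∏ k ∈ Finset.univ.erase i, (βt i - βt k)) *
          (∏ k, (βt i + γh k)))) *
      (∑ j : Fin (m + 1), (∏ k ∈ Finset.univ.erase i, (βh j - βt k)) /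
        (βh j * ∏ k ∈ Finset.univ.erase j, (βh j - βh k))))
    (Ft : Fin (m + 1) → ℝ)
    (hFt : ∀ i, Ft i =
      (((∏ k, βt k) * (∏ k, γt k) * (∏ k, (βt i - η k)) * (∏ k, (βt i + ϑ k))) /
        ((∏ k, η k) * (∏ k, ϑ k) * (∏ k ∈ Finset.univ.erase i, (βt i - βt k)) *
          (∏ k, (βt i + γh k)))) *
      (∑ j : Fin (n + 1), (∏ k, (γh k - γt j)) /
        (-γt j * (βt i + γt j) * ∏ k ∈ Finset.univ.erase j, (γt k - γt j)))) :
    ∀ i : Fin (m + 1), Et i + Ft i + E i = 0 :=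
  stmt_15_general m n η ϑ βt γt βh γh hβt0 hβtint hγt0 hγtint hβh0 hβhint hγh0 hγhint Et hEt E hE Ft
    hFt
end
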